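/- arXiv:2505.10467 — 3 statements merged into one kernel-verified Lean document; each statement's English description precedes it below -/
import Mathlib

section
/- For a finite simplicial complex X and any h > 0, the (0,h)-th thick Betti number β^{0,h}(X;k) equals the number of equivalence classes of the quotient of the set S^{≥h}(X) of simplices of dimension at least h by the relation ∼_{0h}, where σ ∼_{0h} σ' iff they are joined by a walk of 0-lower adjacent simplices each of dimension at least h. -/
set_option linter.unusedSectionVars false
set_option linter.unusedVariables false

open Finset

/-- An abstract simplicial complex on the ambient vertex type `V`:
a finite collection of nonempty finite subsets of `V` closed under nonempty subsets. -/
structure AbsSC (V : Type) where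
  faces : Finset (Finset V)
  nonempty_of_mem : ∀ σ ∈ faces, σ.Nonempty
  down_closed : ∀ σ ∈ faces, ∀ τ, τ ⊆ σ → τ.Nonempty → τ ∈ faces

section Basic

variable {V : Type} [Fintype V] [LinearOrder V]

/-- The `h`-coskeleton of `X`: simplices contained in some simplex of dimension `≥ h`
(`dim τ = τ.card - 1`, so `dim τ ≥ h ↔ h + 1 ≤ τ.card`). -/
def coskeleton (X : AbsSC V) (h : ℕ) : AbsSC V where
  faces := X.faces.filter fun σ => ∃ τ ∈ X.faces, σ ⊆ τ ∧ h + 1 ≤ τ.card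
  nonempty_of_mem σ hσ := X.nonempty_of_mem σ (mem_filter.1 hσ).1
  down_closed σ hσ τ hτσ hne := by
    rw [mem_filter] at hσ ⊢
    obtain ⟨h1, τ', hτ', hsub, hcard⟩ := hσ
    exact ⟨X.down_closed σ h1 τ hτσ hne, τ', hτ', hτσ.trans hsub, hcard⟩

/-- The dimension of a finite simplicial complex. -/
def dimX (X : AbsSC V) : ℕ := X.faces.sup fun σ => σ.card - 1

lemma cosk_subset (X : AbsSC V) (h : ℕ) : (coskeleton X h).faces ⊆ X.faces :=
  filter_subset _ _

lemma cosk_le (X : AbsSC V) {h h' : ℕ} (hh : h ≤ h') :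
    (coskeleton X h').faces ⊆ (coskeleton X h).faces := by
  intro σ hσ
  simp only [coskeleton, mem_filter] at hσ ⊢
  obtain ⟨h1, τ, hτ, hsub, hc⟩ := hσ
  exact ⟨h1, τ, hτ, hsub, by omega⟩

/-- The set of `n`-dimensional simplices of `X`. -/
def simps (X : AbsSC V) (n : ℕ) : Finset (Finset V) :=
  X.faces.filter fun σ => σ.card = n + 1

/-- Evaluation of a simplicial `n`-cochain on a finite set (zero if it is not an `n`-simplex). -/
noncomputable def evalL (X : AbsSC V) (k : Type) [Field k] (n : ℕ) (τ : Finset V) :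
    ({σ : Finset V // σ ∈ simps X n} → k) →ₗ[k] k :=
  if h : τ ∈ simps X n then LinearMap.proj (⟨τ, h⟩ : {σ : Finset V // σ ∈ simps X n}) else 0

/-- The simplicial coboundary operator `δⁿ : Cⁿ(X;k) → Cⁿ⁺¹(X;k)`, with signs determined
by the position of the removed vertex in the increasing enumeration of the simplex. -/
noncomputable def delta (X : AbsSC V) (k : Type) [Field k] (n : ℕ) :
    ({σ : Finset V // σ ∈ simps X n} → k) →ₗ[k]
      ({σ : Finset V // σ ∈ simps X (n + 1)} → k) :=
  LinearMap.pi fun σ =>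
    ∑ v ∈ (σ : Finset V),
      ((-1 : k) ^ ((σ : Finset V).sort (· ≤ ·)).idxOf v) • evalL X k n ((σ : Finset V).erase v)

/-- `δ` landing in degree `n` (the zero map for `n = 0`). -/
noncomputable def deltaTo (X : AbsSC V) (k : Type) [Field k] :
    (n : ℕ) → ({σ : Finset V // σ ∈ simps X (n - 1)} → k) →ₗ[k]
      ({σ : Finset V // σ ∈ simps X n} → k)
  | 0 => 0
  | (m + 1) => delta X k m

/-- The `n`-th simplicial cohomology of `X` with coefficients in `k`. -/
noncomputable abbrev Hmod (X : AbsSC V) (k : Type) [Field k] (n : ℕ) :=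
  ↥(LinearMap.ker (delta X k n)) ⧸
    ((LinearMap.range (deltaTo X k n)).comap (LinearMap.ker (delta X k n)).subtype)

/-- The `n`-th Betti number of `X` with coefficients in `k`. -/
noncomputable def betti (X : AbsSC V) (k : Type) [Field k] (n : ℕ) : ℕ :=
  Module.finrank k (Hmod X k n)

lemma mem_simps_of_subcomplex {X X' : AbsSC V} (hs : X'.faces ⊆ X.faces) {n : ℕ}
    {σ : Finset V} (hσ : σ ∈ simps X' n) : σ ∈ simps X n := by
  simp only [simps, mem_filter] at hσ ⊢
  exact ⟨hs hσ.1, hσ.2⟩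

/-- Restriction of cochains along the inclusion of a subcomplex. -/
noncomputable def resL (X X' : AbsSC V) (hs : X'.faces ⊆ X.faces) (k : Type) [Field k] (n : ℕ) :
    ({σ : Finset V // σ ∈ simps X n} → k) →ₗ[k] ({σ : Finset V // σ ∈ simps X' n} → k) :=
  LinearMap.pi fun σ => LinearMap.proj (⟨σ.1, mem_simps_of_subcomplex hs σ.2⟩ :
    {σ : Finset V // σ ∈ simps X n})

lemma erase_mem_simps (X : AbsSC V) {n : ℕ} {σ : Finset V} (hσ : σ ∈ simps X (n + 1)) {v : V}
    (hv : v ∈ σ) : σ.erase v ∈ simps X n := by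
  simp only [simps, mem_filter] at hσ ⊢
  have hc : (σ.erase v).card = n + 1 := by
    rw [Finset.card_erase_of_mem hv, hσ.2]; omega
  exact ⟨X.down_closed σ hσ.1 _ (Finset.erase_subset _ _)
    (by rw [← Finset.card_pos, hc]; omega), hc⟩

lemma evalL_res (X X' : AbsSC V) (hs : X'.faces ⊆ X.faces) (k : Type) [Field k] (n : ℕ)
    {τ : Finset V} (hτ : τ ∈ simps X' n) (x : {σ : Finset V // σ ∈ simps X n} → k) :
    evalL X' k n τ (resL X X' hs k n x) = evalL X k n τ x := by
  have hτX : τ ∈ simps X n := mem_simps_of_subcomplex hs hτ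
  rw [evalL, dif_pos hτ, evalL, dif_pos hτX]
  simp [resL]

lemma delta_res (X X' : AbsSC V) (hs : X'.faces ⊆ X.faces) (k : Type) [Field k] (n : ℕ) :
    (delta X' k n) ∘ₗ resL X X' hs k n = (resL X X' hs k (n + 1)) ∘ₗ delta X k n := by
  have hres : ∀ (m : ℕ) (x : {σ : Finset V // σ ∈ simps X m} → k)
      (σ : {σ : Finset V // σ ∈ simps X' m}),
      resL X X' hs k m x σ = x ⟨σ.1, mem_simps_of_subcomplex hs σ.2⟩ := fun _ _ _ => rfl
  apply LinearMap.ext; intro x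
  funext σ
  simp only [LinearMap.comp_apply]
  rw [hres]
  simp only [delta, LinearMap.pi_apply, LinearMap.sum_apply, LinearMap.smul_apply, smul_eq_mul]
  refine Finset.sum_congr rfl fun v hv => ?_
  rw [evalL_res X X' hs k n (erase_mem_simps X' σ.2 hv)]

lemma deltaTo_res (X X' : AbsSC V) (hs : X'.faces ⊆ X.faces) (k : Type) [Field k] :
    ∀ n : ℕ, (deltaTo X' k n) ∘ₗ resL X X' hs k (n - 1) =
      (resL X X' hs k n) ∘ₗ deltaTo X k n
  | 0 => by
    apply LinearMap.ext; intro x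
    simp [deltaTo]
  | (m + 1) => delta_res X X' hs k m

/-- The map on cohomology induced by the inclusion of a subcomplex. -/
noncomputable def Hmap (X X' : AbsSC V) (hs : X'.faces ⊆ X.faces) (k : Type) [Field k] (n : ℕ) :
    Hmod X k n →ₗ[k] Hmod X' k n :=
  Submodule.mapQ _ _
    ((resL X X' hs k n).restrict (p := LinearMap.ker (delta X k n))
      (q := LinearMap.ker (delta X' k n))
      (fun x hx => by
        have hcomm := congrArg (fun g => g x) (delta_res X X' hs k n)
        simp only [LinearMap.comp_apply] at hcomm
        rw [LinearMap.mem_ker] at hx ⊢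
        rw [hcomm, hx, map_zero]))
    (by
      intro x hx
      simp only [Submodule.mem_comap, LinearMap.mem_range, Submodule.coe_subtype] at hx ⊢
      obtain ⟨y, hy⟩ := hx
      refine ⟨resL X X' hs k (n - 1) y, ?_⟩
      have hcomm := congrArg (fun g => g y) (deltaTo_res X X' hs k n)
      simp only [LinearMap.comp_apply] at hcomm
      rw [hcomm, hy]
      rfl)

end Basic

/-- A simplicial isomorphism between two finite simplicial complexes: a map on vertices,
simplicial in both directions, bijective on the vertex sets. -/
structure SCIso {V W : Type} [DecidableEq V] [DecidableEq W] (X : AbsSC V) (Y : AbsSC W) where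
  toFun : V → W
  invFun : W → V
  map_faces : ∀ σ ∈ X.faces, σ.image toFun ∈ Y.faces
  inv_faces : ∀ τ ∈ Y.faces, τ.image invFun ∈ X.faces
  left_inv : ∀ v : V, ({v} : Finset V) ∈ X.faces → invFun (toFun v) = v
  right_inv : ∀ w : W, ({w} : Finset W) ∈ Y.faces → toFun (invFun w) = w

section Pers

variable {V : Type} [Fintype V] [LinearOrder V]

/-- A persistence module over `k` indexed by `ℕ`. -/
structure PersMod (k : Type) [Field k] where
  M : ℕ → Type
  [acg : ∀ i, AddCommGroup (M i)]
  [mdl : ∀ i, Module k (M i)]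
  map : ∀ i : ℕ, M i →ₗ[k] M (i + 1)

attribute [instance] PersMod.acg PersMod.mdl

/-- An isomorphism of persistence modules. -/
structure PersIso (k : Type) [Field k] (A B : PersMod k) where
  e : ∀ i, A.M i ≃ₗ[k] B.M i
  comm : ∀ i x, e (i + 1) (A.map i x) = B.map i (e i x)

/-- The interval persistence module `k[b,d)`. -/
noncomputable def intervalMod (k : Type) [Field k] (b d : ℕ) : PersMod k where
  M i := {j : ℕ // j = i ∧ b ≤ j ∧ j < d} → k
  map i :=
    { toFun := fun x _ => if h : b ≤ i ∧ i < d then x ⟨i, rfl, h.1, h.2⟩ else 0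
      map_add' := by intro a b'; funext j; by_cases h : b ≤ i ∧ i < d <;> simp [h]
      map_smul' := by intro c a; funext j; by_cases h : b ≤ i ∧ i < d <;> simp [h] }

/-- Finite direct sum of persistence modules. -/
noncomputable def dirSum (k : Type) [Field k] {m : ℕ} (P : Fin m → PersMod k) : PersMod k where
  M i := ∀ j, (P j).M i
  map i := LinearMap.pi fun j => ((P j).map i).comp (LinearMap.proj j)

/-- The persistence module of the coskeletal cofiltration `X = X⁰ ⊇ X¹ ⊇ ⋯` in degree `n`. -/
noncomputable def coskPers (X : AbsSC V) (k : Type) [Field k] (n : ℕ) : PersMod k where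
  M h := Hmod (coskeleton X h) k n
  map h := Hmap (coskeleton X h) (coskeleton X (h + 1)) (cosk_le X (by omega)) k n

end Pers

section Poset

variable {V : Type} [Fintype V] [LinearOrder V]

/-- The `h`-face poset of `X` (as a finite set of simplices, ordered by `⊂`):
the simplices whose dimension lies in `hs`. -/
def hposet (X : AbsSC V) (hs : Finset ℕ) : Finset (Finset V) :=
  X.faces.filter fun σ => σ.card - 1 ∈ hs

/-- Strictly increasing chains of length `n+1` in a finite family of finite sets,
ordered by strict inclusion. -/
def PChain (P : Finset (Finset V)) (n : ℕ) : Type :=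
  {f : Fin (n + 1) → Finset V // (∀ i, f i ∈ P) ∧ StrictMono f}

/-- The `i`-th face of a chain (deleting the `i`-th entry). -/
def chainFace {P : Finset (Finset V)} {n : ℕ} (g : PChain P (n + 1)) (i : Fin (n + 2)) :
    PChain P n :=
  ⟨fun j => g.1 (i.succAbove j), fun j => g.2.1 _, g.2.2.comp (Fin.strictMono_succAbove i)⟩

/-- The coboundary of the cochain complex computing the cohomology of the constant
sheaf `k` over a finite poset of finite sets. -/
noncomputable def deltaP (P : Finset (Finset V)) (k : Type) [Field k] (n : ℕ) :
    (PChain P n → k) →ₗ[k] (PChain P (n + 1) → k) :=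
  LinearMap.pi fun g =>
    ∑ i : Fin (n + 2), ((-1 : k) ^ (i : ℕ)) • LinearMap.proj (chainFace g i)

noncomputable def deltaPTo (P : Finset (Finset V)) (k : Type) [Field k] :
    (n : ℕ) → (PChain P (n - 1) → k) →ₗ[k] (PChain P n → k)
  | 0 => 0
  | (m + 1) => deltaP P k m

/-- The `n`-th cohomology of (the constant sheaf `k` on) a finite poset of finite sets. -/
noncomputable abbrev PHmod (P : Finset (Finset V)) (k : Type) [Field k] (n : ℕ) :=
  ↥(LinearMap.ker (deltaP P k n)) ⧸
    ((LinearMap.range (deltaPTo P k n)).comap (LinearMap.ker (deltaP P k n)).subtype)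

/-- Betti numbers of a finite poset of finite sets. -/
noncomputable def pbetti (P : Finset (Finset V)) (k : Type) [Field k] (n : ℕ) : ℕ :=
  Module.finrank k (PHmod P k n)

/-- The barycentric subdivision of `X`: vertices are the simplices of `X` and faces are
the nonempty chains of simplices of `X` totally ordered by inclusion. -/
def bary (X : AbsSC V) : AbsSC (Finset V) where
  faces := X.faces.powerset.filter fun c => c.Nonempty ∧ ∀ σ ∈ c, ∀ τ ∈ c, σ ⊆ τ ∨ τ ⊆ σ
  nonempty_of_mem c hc := (mem_filter.1 hc).2.1
  down_closed c hc d hdc hdne := by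
    rw [mem_filter, mem_powerset] at hc ⊢
    exact ⟨hdc.trans hc.1, hdne, fun σ hσ τ hτ => hc.2.2 σ (hdc hσ) τ (hdc hτ)⟩

/-- The `hs`-barycentric subdivision `K(X)^hs`: chains all of whose members have
dimension in `hs`. -/
def baryH (X : AbsSC V) (hs : Finset ℕ) : AbsSC (Finset V) where
  faces := (bary X).faces.filter fun c => ∀ σ ∈ c, σ.card - 1 ∈ hs
  nonempty_of_mem c hc := (bary X).nonempty_of_mem c (mem_filter.1 hc).1
  down_closed c hc d hdc hdne := by
    rw [mem_filter] at hc ⊢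
    exact ⟨(bary X).down_closed c hc.1 d hdc hdne, fun σ hσ => hc.2 σ (hdc hσ)⟩

end Poset


section ThickAux

variable {V : Type} [Fintype V] [LinearOrder V]

/-- Vertices of the `h`-coskeleton, related when they lie in a common simplex of
dimension at least `h`. -/
def R0 (X : AbsSC V) (h : ℕ)
    (v w : {σ : Finset V // σ ∈ simps (coskeleton X h) 0}) : Prop :=
  ∃ τ ∈ X.faces, h + 1 ≤ τ.card ∧ v.1 ⊆ τ ∧ w.1 ⊆ τ

/-- The relation in the statement of the main theorem. -/
def Rbig (X : AbsSC V) (h : ℕ)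
    (σ σ' : {σ : Finset V // σ ∈ X.faces ∧ h + 1 ≤ σ.card}) : Prop :=
  σ = σ' ∨ ∃ (r : ℕ) (τ : Fin (r + 1) → Finset V),
    (∀ i, τ i ∈ X.faces ∧ h + 1 ≤ (τ i).card) ∧
    (∀ i : Fin r, ∃ v : V, v ∈ τ i.castSucc ∧ v ∈ τ i.succ) ∧
    σ.1 ⊆ τ 0 ∧ σ'.1 ⊆ τ (Fin.last r)

lemma singleton_mem_cosk (X : AbsSC V) (h : ℕ) {a : V} {τ : Finset V}
    (hτ : τ ∈ X.faces) (hc : h + 1 ≤ τ.card) (ha : a ∈ τ) :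
    ({a} : Finset V) ∈ simps (coskeleton X h) 0 := by
  simp only [simps, coskeleton, mem_filter]
  exact ⟨⟨X.down_closed τ hτ {a} (by simpa using ha) (singleton_nonempty a),
    τ, hτ, by simpa using ha, hc⟩, by simp⟩

lemma exists_big (X : AbsSC V) (h : ℕ)
    (v : {σ : Finset V // σ ∈ simps (coskeleton X h) 0}) :
    ∃ τ : Finset V, (τ ∈ X.faces ∧ h + 1 ≤ τ.card) ∧ v.1 ⊆ τ := by
  have hv := v.2
  simp only [simps, coskeleton, mem_filter] at hv
  obtain ⟨⟨_, τ, hτ, hsub, hc⟩, _⟩ := hv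
  exact ⟨τ, ⟨hτ, hc⟩, hsub⟩

lemma delta_zero_apply (X' : AbsSC V) (k : Type) [Field k] {a b : V} (hab : a ≠ b)
    (hσ : ({a, b} : Finset V) ∈ simps X' 1)
    (ha : ({a} : Finset V) ∈ simps X' 0) (hb : ({b} : Finset V) ∈ simps X' 0)
    (x : {σ : Finset V // σ ∈ simps X' 0} → k) :
    ∃ ε : k, (ε = 1 ∨ ε = -1) ∧
      delta X' k 0 x ⟨{a, b}, hσ⟩ = ε * (x ⟨{a}, ha⟩ - x ⟨{b}, hb⟩) := by
  have hea : ({a, b} : Finset V).erase a = {b} := by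
    ext x; simp only [mem_erase, mem_insert, mem_singleton]
    constructor
    · rintro ⟨hne, rfl | rfl⟩ <;> tauto
    · rintro rfl; exact ⟨hab.symm, Or.inr rfl⟩
  have heb : ({a, b} : Finset V).erase b = {a} := by
    ext x; simp only [mem_erase, mem_insert, mem_singleton]
    constructor
    · rintro ⟨hne, rfl | rfl⟩ <;> tauto
    · rintro rfl; exact ⟨hab, Or.inl rfl⟩
  set l := ({a, b} : Finset V).sort (· ≤ ·) with hl
  have hlen : l.length = 2 := by rw [hl, Finset.length_sort, Finset.card_pair hab]
  have hma : a ∈ l := by rw [hl, Finset.mem_sort]; simp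
  have hmb : b ∈ l := by rw [hl, Finset.mem_sort]; simp
  have hia : l.idxOf a < 2 := hlen ▸ List.idxOf_lt_length_iff.2 hma
  have hib : l.idxOf b < 2 := hlen ▸ List.idxOf_lt_length_iff.2 hmb
  have hne : l.idxOf a ≠ l.idxOf b := fun hh => hab ((List.idxOf_inj hma (y := b)).1 hh)
  have hval : delta X' k 0 x ⟨{a, b}, hσ⟩ =
      (-1 : k) ^ l.idxOf a * x ⟨{b}, hb⟩ + (-1 : k) ^ l.idxOf b * x ⟨{a}, ha⟩ := by
    simp only [delta, LinearMap.pi_apply, LinearMap.sum_apply, LinearMap.smul_apply,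
      smul_eq_mul]
    rw [Finset.sum_pair hab]
    congr 1
    · rw [hea, evalL, dif_pos hb]; rfl
    · rw [heb, evalL, dif_pos ha]; rfl
  rcases (by omega : l.idxOf a = 0 ∨ l.idxOf a = 1) with h0 | h1
  · have hb1 : l.idxOf b = 1 := by omega
    exact ⟨-1, Or.inr rfl, by rw [hval, h0, hb1]; ring⟩
  · have hb0 : l.idxOf b = 0 := by omega
    exact ⟨1, Or.inl rfl, by rw [hval, h1, hb0]; ring⟩

lemma delta_zero_eq_zero_iff (X' : AbsSC V) (k : Type) [Field k] {a b : V} (hab : a ≠ b)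
    (hσ : ({a, b} : Finset V) ∈ simps X' 1)
    (ha : ({a} : Finset V) ∈ simps X' 0) (hb : ({b} : Finset V) ∈ simps X' 0)
    (x : {σ : Finset V // σ ∈ simps X' 0} → k) :
    delta X' k 0 x ⟨{a, b}, hσ⟩ = 0 ↔ x ⟨{a}, ha⟩ = x ⟨{b}, hb⟩ := by
  obtain ⟨ε, hε, hval⟩ := delta_zero_apply X' k hab hσ ha hb x
  have hεne : ε ≠ 0 := by rcases hε with rfl | rfl <;> simp
  rw [hval, mul_eq_zero, sub_eq_zero]
  tauto

lemma mem_ker_iff_const (X : AbsSC V) (h : ℕ) (k : Type) [Field k]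
    (x : {σ : Finset V // σ ∈ simps (coskeleton X h) 0} → k) :
    x ∈ LinearMap.ker (delta (coskeleton X h) k 0) ↔
      ∀ v w, R0 X h v w → x v = x w := by
  constructor
  · intro hx v w ⟨τ, hτ, hc, hvτ, hwτ⟩
    obtain ⟨a, hva⟩ := Finset.card_eq_one.1 (mem_filter.1 v.2).2
    obtain ⟨b, hwb⟩ := Finset.card_eq_one.1 (mem_filter.1 w.2).2
    have haτ : a ∈ τ := hvτ (by rw [hva]; exact mem_singleton_self a)
    have hbτ : b ∈ τ := hwτ (by rw [hwb]; exact mem_singleton_self b)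
    have ha := singleton_mem_cosk X h hτ hc haτ
    have hb := singleton_mem_cosk X h hτ hc hbτ
    have hveq : v = ⟨{a}, ha⟩ := Subtype.ext hva
    have hweq : w = ⟨{b}, hb⟩ := Subtype.ext hwb
    by_cases hab : a = b
    · subst hab
      rw [hveq, hweq]
    · have habτ : ({a, b} : Finset V) ⊆ τ := by
        intro x hx; rcases mem_insert.1 hx with rfl | hx
        · exact haτ
        · exact (mem_singleton.1 hx) ▸ hbτ
      have hσ : ({a, b} : Finset V) ∈ simps (coskeleton X h) 1 := by
        simp only [simps, coskeleton, mem_filter]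
        exact ⟨⟨X.down_closed τ hτ _ habτ ⟨a, mem_insert_self a {b}⟩, τ, hτ, habτ, hc⟩,
          Finset.card_pair hab⟩
      have hz := congrFun (LinearMap.mem_ker.1 hx) ⟨{a, b}, hσ⟩
      rw [hveq, hweq]
      exact (delta_zero_eq_zero_iff (coskeleton X h) k hab hσ ha hb x).1 hz
  · intro hconst
    rw [LinearMap.mem_ker]
    funext σ
    obtain ⟨a, b, hab, hσab⟩ := Finset.card_eq_two.1 (mem_filter.1 σ.2).2
    have hσeq : σ = ⟨{a, b}, hσab ▸ σ.2⟩ := Subtype.ext hσab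
    have hmem := (mem_filter.1 σ.2).1
    simp only [coskeleton, mem_filter] at hmem
    obtain ⟨_, τ, hτ, hsub, hc⟩ := hmem
    have haτ : a ∈ τ := hsub (hσab ▸ mem_insert_self a {b})
    have hbτ : b ∈ τ := hsub (hσab ▸ mem_insert_of_mem (mem_singleton_self b))
    have ha := singleton_mem_cosk X h hτ hc haτ
    have hb := singleton_mem_cosk X h hτ hc hbτ
    rw [hσeq, Pi.zero_apply]
    exact (delta_zero_eq_zero_iff (coskeleton X h) k hab _ ha hb x).2
      (hconst ⟨{a}, ha⟩ ⟨{b}, hb⟩ ⟨τ, hτ, hc, by simpa using haτ, by simpa using hbτ⟩)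

lemma betti_zero_eq (X' : AbsSC V) (k : Type) [Field k] :
    betti X' k 0 = Module.finrank k (LinearMap.ker (delta X' k 0)) := by
  have h1 : ((LinearMap.range (deltaTo X' k 0)).comap
      (LinearMap.ker (delta X' k 0)).subtype) = ⊥ := by
    rw [show deltaTo X' k 0 = 0 from rfl, LinearMap.range_zero, Submodule.comap_bot,
      Submodule.ker_subtype]
  exact LinearEquiv.finrank_eq (Submodule.quotEquivOfEqBot _ h1)

lemma finrank_ker_eq_card_quot (X : AbsSC V) (h : ℕ) (k : Type) [Field k] :
    Module.finrank k (LinearMap.ker (delta (coskeleton X h) k 0)) =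
      Nat.card (Quot (R0 X h)) := by
  haveI : Finite (Quot (R0 X h)) := Finite.of_surjective _ Quot.mk_surjective
  haveI := Fintype.ofFinite (Quot (R0 X h))
  let Φ : (Quot (R0 X h) → k) →ₗ[k] LinearMap.ker (delta (coskeleton X h) k 0) :=
    { toFun := fun y => ⟨fun v => y (Quot.mk _ v),
        (mem_ker_iff_const X h k _).2 fun v w hvw => congrArg y (Quot.sound hvw)⟩
      map_add' := fun y z => rfl
      map_smul' := fun c y => rfl }
  have hbij : Function.Bijective Φ := by
    constructor
    · intro y z hyz
      funext q
      induction q using Quot.ind with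
      | _ v => exact congrFun (congrArg Subtype.val hyz) v
    · intro x
      refine ⟨Quot.lift (fun v => x.1 v) ((mem_ker_iff_const X h k x.1).1 x.2), ?_⟩
      exact Subtype.ext (funext fun v => rfl)
  rw [LinearEquiv.finrank_eq (LinearEquiv.ofBijective Φ hbij).symm,
    Module.finrank_fintype_fun_eq_card, Nat.card_eq_fintype_card]

lemma rbig_of_shared (X : AbsSC V) (h : ℕ)
    (σ σ' : {σ : Finset V // σ ∈ X.faces ∧ h + 1 ≤ σ.card}) (v : V)
    (hv : v ∈ σ.1) (hv' : v ∈ σ'.1) : Rbig X h σ σ' := by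
  refine Or.inr ⟨1, ![σ.1, σ'.1], ?_, ?_, ?_, ?_⟩
  · intro i
    fin_cases i
    · exact σ.2
    · exact σ'.2
  · intro i
    fin_cases i
    exact ⟨v, by simpa using hv, by simpa using hv'⟩
  · simp
  · simp [Fin.last]

lemma walk_vertices (X : AbsSC V) (h : ℕ) : ∀ (r : ℕ) (τ : Fin (r + 1) → Finset V),
    (∀ i, τ i ∈ X.faces ∧ h + 1 ≤ (τ i).card) →
    (∀ i : Fin r, ∃ v : V, v ∈ τ i.castSucc ∧ v ∈ τ i.succ) →
    ∀ (va vb : {σ : Finset V // σ ∈ simps (coskeleton X h) 0}),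
    va.1 ⊆ τ 0 → vb.1 ⊆ τ (Fin.last r) →
    Quot.mk (R0 X h) va = Quot.mk (R0 X h) vb
  | 0, τ, hτ, _, va, vb, hva, hvb =>
    Quot.sound ⟨τ 0, (hτ 0).1, (hτ 0).2, hva, by
      have : Fin.last 0 = 0 := rfl
      rwa [this] at hvb⟩
  | (r + 1), τ, hτ, hshare, va, vb, hva, hvb => by
    obtain ⟨u, hu0, hu1⟩ := hshare 0
    rw [show ((0 : Fin (r + 1)).castSucc) = 0 from rfl] at hu0
    have hu : ({u} : Finset V) ∈ simps (coskeleton X h) 0 :=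
      singleton_mem_cosk X h (hτ _).1 (hτ _).2 hu1
    have h1 : Quot.mk (R0 X h) va = Quot.mk (R0 X h) ⟨{u}, hu⟩ :=
      Quot.sound ⟨τ 0, (hτ 0).1, (hτ 0).2, hva, by simpa using hu0⟩
    rw [h1]
    exact walk_vertices X h r (fun j => τ j.succ) (fun j => hτ _)
      (fun j => by
        obtain ⟨v, hv1, hv2⟩ := hshare j.succ
        refine ⟨v, ?_, hv2⟩
        show v ∈ τ j.castSucc.succ
        rwa [Fin.succ_castSucc])
      ⟨{u}, hu⟩ vb (by simpa using hu1)
      (by show vb.1 ⊆ τ (Fin.last r).succ; rwa [Fin.succ_last])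

lemma card_quot_eq (X : AbsSC V) (h : ℕ) :
    Nat.card (Quot (R0 X h)) = Nat.card (Quot (Rbig X h)) := by
  have hFdef : ∀ v : {σ : Finset V // σ ∈ simps (coskeleton X h) 0},
      ∃ σb : {σ : Finset V // σ ∈ X.faces ∧ h + 1 ≤ σ.card}, v.1 ⊆ σb.1 := fun v => by
    obtain ⟨τ, hτ, hsub⟩ := exists_big X h v
    exact ⟨⟨τ, hτ⟩, hsub⟩
  have hGdef : ∀ σ : {σ : Finset V // σ ∈ X.faces ∧ h + 1 ≤ σ.card},
      ∃ v : {σ : Finset V // σ ∈ simps (coskeleton X h) 0}, v.1 ⊆ σ.1 := fun σ => by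
    obtain ⟨a, ha⟩ := X.nonempty_of_mem σ.1 σ.2.1
    exact ⟨⟨{a}, singleton_mem_cosk X h σ.2.1 σ.2.2 ha⟩, by simpa using ha⟩
  classical
  let bigOf := fun v => (hFdef v).choose
  let vtxOf := fun σ => (hGdef σ).choose
  have hbigOf : ∀ v, v.1 ⊆ (bigOf v).1 := fun v => (hFdef v).choose_spec
  have hvtxOf : ∀ σ, (vtxOf σ).1 ⊆ σ.1 := fun σ => (hGdef σ).choose_spec
  have hvne : ∀ v : {σ : Finset V // σ ∈ simps (coskeleton X h) 0}, v.1.Nonempty :=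
    fun v => (coskeleton X h).nonempty_of_mem v.1 (mem_filter.1 v.2).1
  -- one-step relation in the big quotient from containing a common vertex set
  have hstep : ∀ (v : {σ : Finset V // σ ∈ simps (coskeleton X h) 0})
      (σ σ' : {σ : Finset V // σ ∈ X.faces ∧ h + 1 ≤ σ.card}),
      v.1 ⊆ σ.1 → v.1 ⊆ σ'.1 → Rbig X h σ σ' := fun v σ σ' hs hs' => by
    obtain ⟨a, ha⟩ := hvne v
    exact rbig_of_shared X h σ σ' a (hs ha) (hs' ha)
  let F : Quot (R0 X h) → Quot (Rbig X h) :=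
    Quot.lift (fun v => Quot.mk _ (bigOf v)) (by
      rintro v w ⟨τ, hτ, hc, hvτ, hwτ⟩
      have hmid : Quot.mk (Rbig X h) (bigOf v) = Quot.mk (Rbig X h) ⟨τ, hτ, hc⟩ :=
        Quot.sound (hstep v _ _ (hbigOf v) hvτ)
      have hmid2 : Quot.mk (Rbig X h) (⟨τ, hτ, hc⟩ :
          {σ : Finset V // σ ∈ X.faces ∧ h + 1 ≤ σ.card}) = Quot.mk (Rbig X h) (bigOf w) :=
        Quot.sound (hstep w _ _ hwτ (hbigOf w))
      exact hmid.trans hmid2)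
  let G : Quot (Rbig X h) → Quot (R0 X h) :=
    Quot.lift (fun σ => Quot.mk _ (vtxOf σ)) (by
      rintro σ σ' (rfl | ⟨r, τ, hτ, hshare, hsub, hsub'⟩)
      · rfl
      · exact walk_vertices X h r τ hτ hshare (vtxOf σ) (vtxOf σ')
          ((hvtxOf σ).trans hsub) ((hvtxOf σ').trans hsub'))
  have hGF : Function.LeftInverse G F := by
    intro q
    induction q using Quot.ind with
    | _ v =>
      simp only [F, G, Quot.lift_mk]
      exact (Quot.sound ⟨(bigOf v).1, (bigOf v).2.1, (bigOf v).2.2,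
        hvtxOf (bigOf v), hbigOf v⟩ : Quot.mk (R0 X h) (vtxOf (bigOf v)) = Quot.mk _ v)
  have hFG : Function.RightInverse G F := by
    intro q
    induction q using Quot.ind with
    | _ σ =>
      simp only [F, G, Quot.lift_mk]
      exact Quot.sound (hstep (vtxOf σ) _ _ (hbigOf (vtxOf σ)) (hvtxOf σ))
  exact Nat.card_congr ⟨F, G, hGF, hFG⟩

end ThickAux


/-- for `h > 0`, the `(0,h)`-thick Betti number equals the number of
equivalence classes of the set of simplices of dimension `≥ h` under the relation of
being joined by a walk of `0`-lower adjacent simplices, each of dimension at least `h`. -/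
theorem thickBetti_zero_eq_classes_of_simplices {V : Type} [Fintype V] [LinearOrder V] (X : AbsSC V)
    (k : Type) [Field k] {h : ℕ} (hpos : 0 < h) :
    betti (coskeleton X h) k 0 =
      Nat.card (Quot (fun σ σ' : {σ : Finset V // σ ∈ X.faces ∧ h + 1 ≤ σ.card} =>
        σ = σ' ∨ ∃ (r : ℕ) (τ : Fin (r + 1) → Finset V),
          (∀ i, τ i ∈ X.faces ∧ h + 1 ≤ (τ i).card) ∧
          (∀ i : Fin r, ∃ v : V, v ∈ τ i.castSucc ∧ v ∈ τ i.succ) ∧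
          σ.1 ⊆ τ 0 ∧ σ'.1 ⊆ τ (Fin.last r))) := by
  rw [betti_zero_eq, finrank_ker_eq_card_quot]
  exact card_quot_eq X h
end

section
/- Let X be a finite simplicial complex and let β^n_{b,d}(X;k) denote the number of intervals equal to [b,d) in the barcode decomposition of the persistence module H^n(X^•;k) of the coskeletal cofiltration. Then β^n_{0,d}(X;k) = 0 for all d ≤ n, and β^n(X;k) = Σ_{d=n+1}^{dim X + 1} β^n_{0,d}(X;k). -/
set_option linter.unusedSectionVars false
set_option linter.unusedVariables false

open Finset

section AuxProof

variable {V : Type} [Fintype V] [LinearOrder V]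

lemma AbsSC.ext' {X Y : AbsSC V} (h : X.faces = Y.faces) : X = Y := by
  cases X; cases Y; subst h; rfl

lemma cosk_zero (X : AbsSC V) : coskeleton X 0 = X := by
  apply AbsSC.ext'
  ext σ
  simp only [coskeleton, mem_filter]
  constructor
  · exact fun h => h.1
  · intro hσ
    exact ⟨hσ, σ, hσ, subset_rfl, Finset.card_pos.2 (X.nonempty_of_mem σ hσ)⟩

lemma mem_cosk (X : AbsSC V) {h : ℕ} {σ τ : Finset V} (hτ : τ ∈ X.faces)
    (hστ : σ ⊆ τ) (hcard : h + 1 ≤ τ.card) (hne : σ.Nonempty) :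
    σ ∈ (coskeleton X h).faces := by
  simp only [coskeleton, mem_filter]
  exact ⟨X.down_closed τ hτ σ hστ hne, τ, hτ, hστ, hcard⟩

lemma simps_cosk_of_le (X : AbsSC V) {h mm : ℕ} (hm : h ≤ mm) {σ : Finset V}
    (hσ : σ ∈ simps X mm) : σ ∈ simps (coskeleton X h) mm := by
  simp only [simps, mem_filter] at hσ ⊢
  refine ⟨mem_cosk X hσ.1 subset_rfl (by omega) ?_, hσ.2⟩
  rw [← Finset.card_pos, hσ.2]; omega

/-- Extension by zero of cochains from a subcomplex. -/
noncomputable def extL (X X' : AbsSC V) (k : Type) [Field k] (mm : ℕ) :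
    ({σ : Finset V // σ ∈ simps X' mm} → k) →ₗ[k] ({σ : Finset V // σ ∈ simps X mm} → k) :=
  LinearMap.pi fun σ => evalL X' k mm σ.1

lemma key_ext (X : AbsSC V) (k : Type) [Field k] (h mm : ℕ) (hm : h ≤ mm)
    (hs : (coskeleton X (h+1)).faces ⊆ (coskeleton X h).faces)
    (z : {σ : Finset V // σ ∈ simps (coskeleton X h) (mm+1)} → k)
    (y : {σ : Finset V // σ ∈ simps (coskeleton X (h+1)) mm} → k)
    (hy : resL _ _ hs k (mm+1) z = delta (coskeleton X (h+1)) k mm y) :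
    z = delta (coskeleton X h) k mm
      (extL (coskeleton X h) (coskeleton X (h+1)) k mm y) := by
  funext σ
  have hσX : σ.1 ∈ simps X (mm+1) := mem_simps_of_subcomplex (cosk_subset X h) σ.2
  have hσ'' : σ.1 ∈ simps (coskeleton X (h+1)) (mm+1) := simps_cosk_of_le X (by omega) hσX
  have hz : z σ = resL _ _ hs k (mm+1) z ⟨σ.1, hσ''⟩ := by
    show z σ = z ⟨σ.1, _⟩
    congr 1
  rw [hz, hy]
  simp only [delta, LinearMap.pi_apply, LinearMap.sum_apply, LinearMap.smul_apply, smul_eq_mul]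
  refine Finset.sum_congr rfl fun v hv => ?_
  congr 1
  have he'' : σ.1.erase v ∈ simps (coskeleton X (h+1)) mm := erase_mem_simps _ hσ'' hv
  have he' : σ.1.erase v ∈ simps (coskeleton X h) mm :=
    mem_simps_of_subcomplex hs he''
  rw [evalL, dif_pos he'', evalL, dif_pos he']
  show y ⟨σ.1.erase v, he''⟩ = extL _ _ k mm y ⟨σ.1.erase v, he'⟩
  show y ⟨σ.1.erase v, he''⟩ = evalL _ k mm (σ.1.erase v) y
  rw [evalL, dif_pos he'']
  rfl

lemma hmap_injective (X : AbsSC V) (k : Type) [Field k] (h n : ℕ) (hn : h + 1 ≤ n)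
    (hs : (coskeleton X (h+1)).faces ⊆ (coskeleton X h).faces) :
    Function.Injective (Hmap (coskeleton X h) (coskeleton X (h+1)) hs k n) := by
  obtain ⟨mm, rfl⟩ : ∃ mm, n = mm + 1 := ⟨n - 1, by omega⟩
  rw [injective_iff_map_eq_zero]
  intro a ha
  obtain ⟨w, rfl⟩ := Submodule.Quotient.mk_surjective _ a
  rw [Hmap, Submodule.mapQ_apply, Submodule.Quotient.mk_eq_zero] at ha
  simp only [Submodule.mem_comap, Submodule.coe_subtype, LinearMap.mem_range] at ha
  obtain ⟨y, hy⟩ := ha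
  rw [Submodule.Quotient.mk_eq_zero]
  simp only [Submodule.mem_comap, Submodule.coe_subtype, LinearMap.mem_range]
  refine ⟨extL (coskeleton X h) (coskeleton X (h+1)) k mm y, ?_⟩
  have hres : (deltaTo (coskeleton X (h+1)) k (mm+1)) y =
      resL _ _ hs k (mm+1) (w : {σ : Finset V // σ ∈ simps (coskeleton X h) (mm+1)} → k) := hy
  exact (key_ext X k h mm (by omega) hs w.1 y hres.symm).symm

/-- Composite of persistence structure maps from time `0` to time `t`. -/
noncomputable def persComp (k : Type) [Field k] (P : PersMod k) : (t : ℕ) → (P.M 0 →ₗ[k] P.M t)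
  | 0 => LinearMap.id
  | (t+1) => (P.map t).comp (persComp k P t)

lemma persComp_iso (k : Type) [Field k] {A B : PersMod k} (e : PersIso k A B) :
    ∀ (t : ℕ) (x : A.M 0), e.e t (persComp k A t x) = persComp k B t (e.e 0 x)
  | 0, x => rfl
  | (t+1), x => by
    show e.e (t+1) (A.map t (persComp k A t x)) = B.map t (persComp k B t (e.e 0 x))
    rw [e.comm t, persComp_iso k e t x]

lemma persComp_dirSum (k : Type) [Field k] {mm : ℕ} (P : Fin mm → PersMod k) :
    ∀ (t : ℕ) (x : (dirSum k P).M 0) (j : Fin mm),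
      persComp k (dirSum k P) t x j = persComp k (P j) t (x j)
  | 0, x, j => rfl
  | (t+1), x, j => by
    show (P j).map t (persComp k (dirSum k P) t x j) = (P j).map t (persComp k (P j) t (x j))
    rw [persComp_dirSum k P t x j]

lemma persComp_cosk_injective (X : AbsSC V) (k : Type) [Field k] (n : ℕ) :
    ∀ t, t ≤ n → Function.Injective (persComp k (coskPers X k n) t)
  | 0, _ => fun a b hab => hab
  | (t+1), ht => by
    have h1 := persComp_cosk_injective X k n t (by omega)
    have h2 : Function.Injective ((coskPers X k n).map t) :=
      hmap_injective X k t n (by omega) _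
    intro a b hab
    exact h1 (h2 hab)

lemma interval_M_eq_zero (k : Type) [Field k] {b d i : ℕ} (hid : d ≤ i)
    (x : (intervalMod k b d).M i) : x = 0 := by
  funext j
  exact absurd j.2 (by omega)

lemma finrank_interval_M0 (k : Type) [Field k] (b d : ℕ) (hd : 0 < d) :
    Module.finrank k ((intervalMod k b d).M 0) = if b = 0 then 1 else 0 := by
  show Module.finrank k ({j : ℕ // j = 0 ∧ b ≤ j ∧ j < d} → k) = _
  by_cases hb : b = 0
  · subst hb
    haveI : Unique {j : ℕ // j = 0 ∧ 0 ≤ j ∧ j < d} :=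
      ⟨⟨⟨0, rfl, le_refl 0, hd⟩⟩, fun a => Subtype.ext a.2.1⟩
    haveI := Fintype.ofFinite {j : ℕ // j = 0 ∧ 0 ≤ j ∧ j < d}
    rw [if_pos rfl, Module.finrank_fintype_fun_eq_card, Fintype.card_unique]
  · haveI : IsEmpty {j : ℕ // j = 0 ∧ b ≤ j ∧ j < d} :=
      ⟨fun a => hb (Nat.le_zero.1 (a.2.1 ▸ a.2.2.1))⟩
    haveI := Fintype.ofFinite {j : ℕ // j = 0 ∧ b ≤ j ∧ j < d}
    rw [if_neg hb, Module.finrank_fintype_fun_eq_card, Fintype.card_eq_zero]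

instance interval_M_finite (k : Type) [Field k] (b d i : ℕ) :
    Module.Finite k ((intervalMod k b d).M i) := by
  haveI : Subsingleton {j : ℕ // j = i ∧ b ≤ j ∧ j < d} :=
    ⟨fun a b' => Subtype.ext (a.2.1.trans b'.2.1.symm)⟩
  haveI : Finite {j : ℕ // j = i ∧ b ≤ j ∧ j < d} := Finite.of_subsingleton
  show Module.Finite k ({j : ℕ // j = i ∧ b ≤ j ∧ j < d} → k)
  infer_instance

end AuxProof
/-- in any interval decomposition of `Hⁿ(X^•;k)`, no interval `[0,d)`
with `d ≤ n` occurs, and `βⁿ(X;k)` is the sum over `d = n+1, …, dim X + 1` of the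
number of intervals `[0,d)`. -/

theorem betti_stratification_coskeletal {V : Type} [Fintype V] [LinearOrder V] (X : AbsSC V) (k : Type) [Field k] (n : ℕ)
    (m : ℕ) (bd : Fin m → ℕ × ℕ)
    (hvalid : ∀ j, (bd j).1 < (bd j).2 ∧ (bd j).2 ≤ dimX X + 1)
    (hiso : Nonempty (PersIso k (coskPers X k n)
      (dirSum k fun j => intervalMod k (bd j).1 (bd j).2))) :
    (∀ d ≤ n, (Finset.univ.filter fun j => bd j = (0, d)).card = 0) ∧
    betti X k n = ∑ d ∈ Finset.Icc (n + 1) (dimX X + 1),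
      (Finset.univ.filter fun j => bd j = (0, d)).card := by
  classical
  obtain ⟨e⟩ := hiso
  set A := coskPers X k n with hA
  set B := dirSum k fun j => intervalMod k (bd j).1 (bd j).2 with hB
  -- Part 1: no interval [0,d) with d ≤ n
  have hno : ∀ d ≤ n, ∀ j, bd j ≠ (0, d) := by
    intro d hd j0 hj0
    have hd0 : 0 < d := by have := (hvalid j0).1; rw [hj0] at this; exact this
    -- the nonzero element supported on the j0 summand at time 0
    let x : B.M 0 := Pi.single j0 (fun _ => 1)
    have hxn : persComp k B n x = 0 := by
      funext j
      rw [persComp_dirSum]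
      by_cases hj : j = j0
      · subst hj
        have : d ≤ n := hd
        exact interval_M_eq_zero k (by rw [hj0]; exact this) _
      · have hxj : x j = 0 := Pi.single_eq_of_ne hj _
        rw [hxj, map_zero]
        rfl
    have hx0 : x = 0 := by
      have h1 : e.e n (persComp k A n ((e.e 0).symm x)) = persComp k B n ((e.e 0) ((e.e 0).symm x)) :=
        persComp_iso k e n ((e.e 0).symm x)
      rw [(e.e 0).apply_symm_apply, hxn] at h1
      have h2 : persComp k A n ((e.e 0).symm x) = 0 := by
        apply (e.e n).injective
        rw [h1, map_zero]
      have h3 : (e.e 0).symm x = 0 := persComp_cosk_injective X k n n le_rfl (by rw [h2, map_zero])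
      have := congrArg (e.e 0) h3
      rwa [(e.e 0).apply_symm_apply, map_zero] at this
    have hx1 : x j0 = 0 := by rw [hx0]; rfl
    have hs1 : x j0 = fun _ => (1:k) :=
      Pi.single_eq_same (M := fun j => (intervalMod k (bd j).1 (bd j).2).M 0) j0 _
    have hne : {j : ℕ // j = 0 ∧ (bd j0).1 ≤ j ∧ j < (bd j0).2} :=
      ⟨0, rfl, by rw [hj0], by rw [hj0]; exact hd0⟩
    have h1 : (1:k) = 0 := congrFun (hs1.symm.trans hx1) hne
    exact one_ne_zero h1
  have part1 : ∀ d ≤ n, (Finset.univ.filter fun j => bd j = (0, d)).card = 0 := by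
    intro d hd
    rw [Finset.card_eq_zero, Finset.filter_eq_empty_iff]
    intro j _
    exact hno d hd j
  refine ⟨part1, ?_⟩
  -- Part 2
  have hbetti : betti X k n = Module.finrank k (B.M 0) := by
    have h1 : betti X k n = Module.finrank k (A.M 0) := by
      show Module.finrank k (Hmod X k n) = Module.finrank k (Hmod (coskeleton X 0) k n)
      rw [cosk_zero]
    rw [h1]
    exact (e.e 0).finrank_eq
  have h2 : Module.finrank k (B.M 0)
      = ∑ j : Fin m, Module.finrank k ((intervalMod k (bd j).1 (bd j).2).M 0) := by
    show Module.finrank k (∀ j : Fin m, (intervalMod k (bd j).1 (bd j).2).M 0) = _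
    exact Module.finrank_pi_fintype k
  have h3 : ∑ j : Fin m, Module.finrank k ((intervalMod k (bd j).1 (bd j).2).M 0)
      = ∑ j : Fin m, (if (bd j).1 = 0 then 1 else 0) := by
    refine Finset.sum_congr rfl fun j _ => ?_
    exact finrank_interval_M0 k _ _ (lt_of_le_of_lt (Nat.zero_le _) (hvalid j).1)
  have key : ∀ j : Fin m, (∑ d ∈ Finset.Icc (n+1) (dimX X + 1),
      if bd j = (0,d) then 1 else 0) = if (bd j).1 = 0 then 1 else 0 := by
    intro j
    by_cases hb : (bd j).1 = 0
    · rw [if_pos hb]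
      have hbd : bd j = (0, (bd j).2) := by rw [← hb]
      have h2n : n + 1 ≤ (bd j).2 := by
        by_contra hlt
        exact hno (bd j).2 (by omega) j hbd
      have hmem : (bd j).2 ∈ Finset.Icc (n+1) (dimX X + 1) :=
        Finset.mem_Icc.2 ⟨h2n, (hvalid j).2⟩
      rw [Finset.sum_eq_single ((bd j).2)]
      · rw [if_pos hbd]
      · intro d hd hne
        rw [if_neg]
        intro hc
        exact hne (congrArg Prod.snd hc).symm
      · intro habs; exact absurd hmem habs
    · rw [if_neg hb]
      apply Finset.sum_eq_zero
      intro d hd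
      rw [if_neg]
      intro hc
      exact hb (congrArg Prod.fst hc)
  calc betti X k n = ∑ j : Fin m, (if (bd j).1 = 0 then 1 else 0) := by
        rw [hbetti, h2, h3]
    _ = ∑ j : Fin m, ∑ d ∈ Finset.Icc (n+1) (dimX X + 1), (if bd j = (0,d) then 1 else 0) := by
        exact Finset.sum_congr rfl fun j _ => (key j).symm
    _ = ∑ d ∈ Finset.Icc (n+1) (dimX X + 1), ∑ j : Fin m, (if bd j = (0,d) then 1 else 0) :=
        Finset.sum_comm
    _ = ∑ d ∈ Finset.Icc (n + 1) (dimX X + 1),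
        (Finset.univ.filter fun j => bd j = (0, d)).card := by
        refine Finset.sum_congr rfl fun d _ => ?_
        rw [Finset.card_filter]
end

section
/- For a finite simplicial complex X and h = {h_0 < h_1 < ... < h_m}, the (0,h)-th cohesive Betti number equals the number of (h_0,h_1)-connected components: dim H^0(P_X^h;k) = #(S^{h_0}(X)/∼_{h_0 h_1}). -/
set_option linter.unusedSectionVars false
set_option linter.unusedVariables false

open Finset

section AuxPH0

variable {V : Type} [Fintype V] [LinearOrder V]

/-- Comparability relation on elements of a finite family of finite sets. -/
def Rrel (P : Finset (Finset V)) (a b : {σ : Finset V // σ ∈ P}) : Prop :=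
  a.1 ⊂ b.1 ∨ b.1 ⊂ a.1

/-- The one-element chain. -/
def singleChain (P : Finset (Finset V)) (a : {σ : Finset V // σ ∈ P}) : PChain P 0 :=
  ⟨fun _ => a.1, fun _ => a.2, by
    intro i j hij
    rw [Fin.eq_zero i, Fin.eq_zero j] at hij
    exact absurd hij (lt_irrefl 0)⟩

/-- The two-element chain on a strict inclusion. -/
def pairChain (P : Finset (Finset V)) (a b : {σ : Finset V // σ ∈ P}) (hab : a.1 ⊂ b.1) :
    PChain P 1 :=
  ⟨![a.1, b.1], by
    refine ⟨fun i => ?_, ?_⟩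
    · fin_cases i
      · exact a.2
      · exact b.2
    · rw [Fin.strictMono_iff_lt_succ]
      intro i
      fin_cases i
      simpa using hab⟩

lemma chainFace_pair_zero (P : Finset (Finset V)) (a b : {σ : Finset V // σ ∈ P})
    (hab : a.1 ⊂ b.1) : chainFace (pairChain P a b hab) 0 = singleChain P b := by
  apply Subtype.ext; funext j
  have hj : j = 0 := Fin.eq_zero j
  subst hj
  show (![a.1, b.1] : Fin 2 → Finset V) ((0 : Fin 2).succAbove 0) = b.1
  have h : (0 : Fin 2).succAbove 0 = 1 := by decide
  rw [h]; simp

lemma chainFace_pair_one (P : Finset (Finset V)) (a b : {σ : Finset V // σ ∈ P})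
    (hab : a.1 ⊂ b.1) : chainFace (pairChain P a b hab) 1 = singleChain P a := by
  apply Subtype.ext; funext j
  have hj : j = 0 := Fin.eq_zero j
  subst hj
  show (![a.1, b.1] : Fin 2 → Finset V) ((1 : Fin 2).succAbove 0) = a.1
  have h : (1 : Fin 2).succAbove 0 = 0 := by decide
  rw [h]; simp

lemma deltaP_apply_zero (P : Finset (Finset V)) (k : Type) [Field k] (x : PChain P 0 → k)
    (g : PChain P 1) :
    deltaP P k 0 x g = x (chainFace g 0) - x (chainFace g 1) := by
  simp [deltaP, Fin.sum_univ_two, sub_eq_add_neg]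

lemma mem_ker_deltaP_iff (P : Finset (Finset V)) (k : Type) [Field k] (x : PChain P 0 → k) :
    x ∈ LinearMap.ker (deltaP P k 0) ↔
      ∀ a b : {σ : Finset V // σ ∈ P}, a.1 ⊂ b.1 →
        x (singleChain P a) = x (singleChain P b) := by
  constructor
  · intro hx a b hab
    have h0 := congrFun (LinearMap.mem_ker.mp hx) (pairChain P a b hab)
    rw [deltaP_apply_zero, chainFace_pair_zero, chainFace_pair_one] at h0
    exact (sub_eq_zero.mp h0).symm
  · intro h
    rw [LinearMap.mem_ker]
    funext g
    show deltaP P k 0 x g = 0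
    rw [deltaP_apply_zero]
    have hab : g.1 0 ⊂ g.1 1 := by
      have := g.2.2 (show (0 : Fin 2) < 1 by decide)
      exact this
    have e0 : chainFace g 0 = singleChain P ⟨g.1 1, g.2.1 1⟩ := by
      apply Subtype.ext; funext j
      have hj : j = 0 := Fin.eq_zero j
      subst hj
      show g.1 ((0 : Fin 2).succAbove 0) = g.1 1
      congr 1
    have e1 : chainFace g 1 = singleChain P ⟨g.1 0, g.2.1 0⟩ := by
      apply Subtype.ext; funext j
      have hj : j = 0 := Fin.eq_zero j
      subst hj
      show g.1 ((1 : Fin 2).succAbove 0) = g.1 0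
      congr 1
    rw [e0, e1, h ⟨g.1 0, g.2.1 0⟩ ⟨g.1 1, g.2.1 1⟩ hab, sub_self]

/-- Pullback of a function on components to a cochain in degree `0`. -/
noncomputable def PhiQ (P : Finset (Finset V)) (k : Type) [Field k] :
    (Quot (Rrel P) → k) →ₗ[k] (PChain P 0 → k) where
  toFun y c := y (Quot.mk _ ⟨c.1 0, c.2.1 0⟩)
  map_add' _ _ := rfl
  map_smul' _ _ := rfl

lemma PhiQ_injective (P : Finset (Finset V)) (k : Type) [Field k] :
    Function.Injective (PhiQ P k) := by
  intro y z h
  funext q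
  induction q using Quot.ind with
  | _ a => exact congrFun h (singleChain P a)

lemma range_PhiQ (P : Finset (Finset V)) (k : Type) [Field k] :
    LinearMap.range (PhiQ P k) = LinearMap.ker (deltaP P k 0) := by
  apply le_antisymm
  · rintro _ ⟨y, rfl⟩
    rw [mem_ker_deltaP_iff]
    intro a b hab
    show y (Quot.mk (Rrel P) a) = y (Quot.mk (Rrel P) b)
    exact congrArg y (Quot.sound (Or.inl hab))
  · intro x hx
    rw [mem_ker_deltaP_iff] at hx
    refine ⟨Quot.lift (fun a => x (singleChain P a)) ?_, ?_⟩
    · intro a b hab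
      rcases hab with h | h
      · exact hx a b h
      · exact (hx b a h).symm
    · funext c
      show x (singleChain P ⟨c.1 0, c.2.1 0⟩) = x c
      congr 1
      apply Subtype.ext; funext j
      have hj : j = 0 := Fin.eq_zero j
      subst hj
      rfl

lemma pbetti_zero_eq (P : Finset (Finset V)) (k : Type) [Field k] :
    pbetti P k 0 = Nat.card (Quot (Rrel P)) := by
  classical
  have hbot : (LinearMap.range (deltaPTo P k 0)).comap
      (LinearMap.ker (deltaP P k 0)).subtype = ⊥ := by
    rw [show deltaPTo P k 0 = 0 from rfl, LinearMap.range_zero, Submodule.comap_bot,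
      Submodule.ker_subtype]
  have e1 : PHmod P k 0 ≃ₗ[k] LinearMap.ker (deltaP P k 0) :=
    Submodule.quotEquivOfEqBot _ hbot
  have e2 : (Quot (Rrel P) → k) ≃ₗ[k] LinearMap.ker (deltaP P k 0) :=
    (LinearEquiv.ofInjective _ (PhiQ_injective P k)).trans
      (LinearEquiv.ofEq _ _ (range_PhiQ P k))
  have := Fintype.ofFinite (Quot (Rrel P))
  rw [pbetti, e1.finrank_eq, ← e2.finrank_eq, Module.finrank_fintype_fun_eq_card,
    ← Nat.card_eq_fintype_card]

end AuxPH0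
section CombPH0

variable {V : Type} [Fintype V] [LinearOrder V]

/-- The walk relation on `h0`-simplices. -/
def Wrel (X : AbsSC V) (h0 h1 : ℕ) (σ σ' : {σ : Finset V // σ ∈ simps X h0}) : Prop :=
  σ = σ' ∨ ∃ (r : ℕ) (τ : Fin (r + 1) → Finset V),
    (∀ i, τ i ∈ X.faces ∧ h1 + 1 ≤ (τ i).card) ∧
    (∀ i : Fin r, ∃ ρ ∈ X.faces, ρ.card = h0 + 1 ∧ ρ ⊆ τ i.castSucc ∧ ρ ⊆ τ i.succ) ∧
    σ.1 ⊆ τ 0 ∧ σ'.1 ⊆ τ (Fin.last r)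

lemma mem_hposet_of_face {X : AbsSC V} {hs : Finset ℕ} {h0 : ℕ} (hh0 : h0 ∈ hs)
    {τ ρ : Finset V} (hτ : τ ∈ X.faces) (hsub : ρ ⊆ τ) (hcard : ρ.card = h0 + 1) :
    ρ ∈ hposet X hs := by
  have hρ : ρ ∈ X.faces :=
    X.down_closed τ hτ ρ hsub (by rw [← Finset.card_pos, hcard]; omega)
  simp only [hposet, mem_filter]
  exact ⟨hρ, by rw [hcard]; simpa using hh0⟩

lemma mem_simps_of_face {X : AbsSC V} {h0 : ℕ}
    {τ ρ : Finset V} (hτ : τ ∈ X.faces) (hsub : ρ ⊆ τ) (hcard : ρ.card = h0 + 1) :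
    ρ ∈ simps X h0 := by
  have hρ : ρ ∈ X.faces :=
    X.down_closed τ hτ ρ hsub (by rw [← Finset.card_pos, hcard]; omega)
  simp only [simps, mem_filter]
  exact ⟨hρ, hcard⟩

lemma mem_hposet_of_simps {X : AbsSC V} {hs : Finset ℕ} {h0 : ℕ} (hh0 : h0 ∈ hs)
    {σ : Finset V} (h : σ ∈ simps X h0) : σ ∈ hposet X hs := by
  simp only [simps, mem_filter] at h
  simp only [hposet, mem_filter]
  exact ⟨h.1, by rw [h.2]; simpa using hh0⟩

lemma hposet_faces_card {X : AbsSC V} {hs : Finset ℕ} {h0 : ℕ} (hh0 : h0 ∈ hs)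
    (hmin0 : ∀ j ∈ hs, h0 ≤ j) {a : Finset V} (ha : a ∈ hposet X hs) :
    a ∈ X.faces ∧ h0 + 1 ≤ a.card := by
  simp only [hposet, mem_filter] at ha
  have h1 : 1 ≤ a.card := Finset.card_pos.mpr (X.nonempty_of_mem a ha.1)
  have h2 := hmin0 _ ha.2
  exact ⟨ha.1, by omega⟩

lemma big_of_ssubset {X : AbsSC V} {hs : Finset ℕ} {h0 h1 : ℕ} (hh0 : h0 ∈ hs)
    (hmin0 : ∀ j ∈ hs, h0 ≤ j) (hmin1 : ∀ j ∈ hs, j ≠ h0 → h1 ≤ j)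
    {a b : Finset V} (ha : a ∈ hposet X hs) (hb : b ∈ hposet X hs) (hab : a ⊂ b) :
    b ∈ X.faces ∧ h1 + 1 ≤ b.card := by
  have ha' := hposet_faces_card hh0 hmin0 ha
  simp only [hposet, mem_filter] at hb
  have hlt : a.card < b.card := Finset.card_lt_card hab
  have hne : b.card - 1 ≠ h0 := by omega
  have := hmin1 _ hb.2 hne
  exact ⟨hb.1, by omega⟩

/-- Any two `h0`-faces of a big simplex give the same class, by a swap walk. -/
lemma quot_eq_of_big {X : AbsSC V} {hs : Finset ℕ} {h0 h1 : ℕ} (hh0 : h0 ∈ hs)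
    (hh1 : h1 ∈ hs) (hlt : h0 < h1) {τ : Finset V} (hτ : τ ∈ X.faces)
    (hτc : h1 + 1 ≤ τ.card) :
    ∀ (n : ℕ) (ρ1 ρ2 : Finset V) (m1 : ρ1 ∈ hposet X hs) (m2 : ρ2 ∈ hposet X hs),
      ρ1 ⊆ τ → ρ2 ⊆ τ → ρ1.card = h0 + 1 → ρ2.card = h0 + 1 → (ρ1 \ ρ2).card ≤ n →
      Quot.mk (Rrel (hposet X hs)) ⟨ρ1, m1⟩ = Quot.mk (Rrel (hposet X hs)) ⟨ρ2, m2⟩ := by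
  intro n
  induction n with
  | zero =>
    intro ρ1 ρ2 m1 m2 s1 s2 c1 c2 hn
    have hsub : ρ1 ⊆ ρ2 := by
      rw [← Finset.sdiff_eq_empty_iff_subset]
      exact Finset.card_eq_zero.mp (by omega)
    have : ρ1 = ρ2 := Finset.eq_of_subset_of_card_le hsub (by omega)
    subst this; rfl
  | succ n ih =>
    intro ρ1 ρ2 m1 m2 s1 s2 c1 c2 hn
    by_cases heq : ρ1 = ρ2
    · subst heq; rfl
    · have hne1 : (ρ1 \ ρ2).Nonempty := by
        rw [Finset.sdiff_nonempty]
        intro hsub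
        exact heq (Finset.eq_of_subset_of_card_le hsub (by omega))
      have hne2 : (ρ2 \ ρ1).Nonempty := by
        rw [Finset.sdiff_nonempty]
        intro hsub
        exact heq (Finset.eq_of_subset_of_card_le hsub (by omega)).symm
      obtain ⟨v, hv⟩ := hne1
      obtain ⟨w, hw⟩ := hne2
      have hvmem : v ∈ ρ1 \ ρ2 := hv
      rw [Finset.mem_sdiff] at hv hw
      set ρ' := insert w (ρ1.erase v) with hρ'
      have hwv : w ∉ ρ1.erase v := fun h => hw.2 (Finset.mem_of_mem_erase h)
      have c' : ρ'.card = h0 + 1 := by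
        rw [hρ', Finset.card_insert_of_notMem hwv, Finset.card_erase_of_mem hv.1, c1]
        omega
      have s' : ρ' ⊆ τ := by
        intro x hx
        rw [hρ', Finset.mem_insert] at hx
        rcases hx with rfl | hx
        · exact s2 hw.1
        · exact s1 (Finset.mem_of_mem_erase hx)
      have hu : ρ1 ∪ ρ' ⊆ τ := Finset.union_subset s1 s'
      have hucard : (ρ1 ∪ ρ').card ≤ h1 + 1 := by
        have hsub : ρ1 ∪ ρ' ⊆ insert w ρ1 := by
          intro x hx
          rw [Finset.mem_union] at hx
          rcases hx with hx | hx
          · exact Finset.mem_insert_of_mem hx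
          · rw [hρ', Finset.mem_insert] at hx
            rcases hx with rfl | hx
            · exact Finset.mem_insert_self _ _
            · exact Finset.mem_insert_of_mem (Finset.mem_of_mem_erase hx)
        calc (ρ1 ∪ ρ').card ≤ (insert w ρ1).card := Finset.card_le_card hsub
          _ ≤ ρ1.card + 1 := Finset.card_insert_le _ _
          _ ≤ h1 + 1 := by omega
      obtain ⟨ν, hνsub, hντ, hνcard⟩ := Finset.exists_subsuperset_card_eq hu hucard hτc
      have mν : ν ∈ hposet X hs := mem_hposet_of_face hh1 hτ hντ hνcard
      have m' : ρ' ∈ hposet X hs := mem_hposet_of_face hh0 hτ s' c'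
      have hρ1ν : ρ1 ⊂ ν := by
        rw [Finset.ssubset_iff_subset_ne]
        refine ⟨Finset.subset_union_left.trans hνsub, fun h => ?_⟩
        rw [h] at c1; omega
      have hρ'ν : ρ' ⊂ ν := by
        rw [Finset.ssubset_iff_subset_ne]
        refine ⟨Finset.subset_union_right.trans hνsub, fun h => ?_⟩
        rw [h] at c'; omega
      have step1 : Quot.mk (Rrel (hposet X hs)) ⟨ρ1, m1⟩
          = Quot.mk (Rrel (hposet X hs)) ⟨ν, mν⟩ := Quot.sound (Or.inl hρ1ν)
      have step2 : Quot.mk (Rrel (hposet X hs)) ⟨ν, mν⟩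
          = Quot.mk (Rrel (hposet X hs)) ⟨ρ', m'⟩ := Quot.sound (Or.inr hρ'ν)
      have hcard' : (ρ' \ ρ2).card ≤ n := by
        have hsub : ρ' \ ρ2 ⊆ (ρ1 \ ρ2).erase v := by
          intro x hx
          rw [Finset.mem_sdiff, hρ', Finset.mem_insert] at hx
          rcases hx with ⟨rfl | hx1, hx2⟩
          · exact absurd hw.1 hx2
          · rw [Finset.mem_erase] at hx1
            rw [Finset.mem_erase, Finset.mem_sdiff]
            exact ⟨hx1.1, hx1.2, hx2⟩
        have := Finset.card_le_card hsub
        rw [Finset.card_erase_of_mem hvmem] at this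
        have hpos : 1 ≤ (ρ1 \ ρ2).card := Finset.card_pos.mpr ⟨v, hvmem⟩
        omega
      exact step1.trans (step2.trans (ih ρ' ρ2 m' m2 s' s2 c' c2 hcard'))

lemma quot_eq_of_big' {X : AbsSC V} {hs : Finset ℕ} {h0 h1 : ℕ} (hh0 : h0 ∈ hs)
    (hh1 : h1 ∈ hs) (hlt : h0 < h1) {τ : Finset V} (hτ : τ ∈ X.faces)
    (hτc : h1 + 1 ≤ τ.card) {ρ1 ρ2 : Finset V} (m1 : ρ1 ∈ hposet X hs)
    (m2 : ρ2 ∈ hposet X hs) (s1 : ρ1 ⊆ τ) (s2 : ρ2 ⊆ τ)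
    (c1 : ρ1.card = h0 + 1) (c2 : ρ2.card = h0 + 1) :
    Quot.mk (Rrel (hposet X hs)) ⟨ρ1, m1⟩ = Quot.mk (Rrel (hposet X hs)) ⟨ρ2, m2⟩ :=
  quot_eq_of_big hh0 hh1 hlt hτ hτc (ρ1 \ ρ2).card ρ1 ρ2 m1 m2 s1 s2 c1 c2 le_rfl

/-- Along a walk, every `h0`-face of every step has the same class as the start. -/
lemma quot_eq_of_walk {X : AbsSC V} {hs : Finset ℕ} {h0 h1 : ℕ} (hh0 : h0 ∈ hs)
    (hh1 : h1 ∈ hs) (hlt : h0 < h1) {r : ℕ} {τ : Fin (r + 1) → Finset V}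
    (hbig : ∀ i, τ i ∈ X.faces ∧ h1 + 1 ≤ (τ i).card)
    (hlink : ∀ i : Fin r, ∃ ρ ∈ X.faces, ρ.card = h0 + 1 ∧ ρ ⊆ τ i.castSucc ∧ ρ ⊆ τ i.succ)
    {σ : Finset V} (mσ : σ ∈ hposet X hs) (hσc : σ.card = h0 + 1) (hσ0 : σ ⊆ τ 0) :
    ∀ (i : ℕ) (hi : i ≤ r) (ρ : Finset V) (mρ : ρ ∈ hposet X hs),
      ρ ⊆ τ ⟨i, by omega⟩ → ρ.card = h0 + 1 →
      Quot.mk (Rrel (hposet X hs)) ⟨σ, mσ⟩ = Quot.mk (Rrel (hposet X hs)) ⟨ρ, mρ⟩ := by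
  intro i
  induction i with
  | zero =>
    intro hi ρ mρ hρs hρc
    have h00 : (⟨0, by omega⟩ : Fin (r + 1)) = 0 := rfl
    rw [h00] at hρs
    exact quot_eq_of_big' hh0 hh1 hlt (hbig 0).1 (hbig 0).2 mσ mρ hσ0 hρs hσc hρc
  | succ i ih =>
    intro hi ρ mρ hρs hρc
    have hi' : i < r := by omega
    obtain ⟨ρ0, hρ0f, hρ0c, hρ0l, hρ0r⟩ := hlink ⟨i, hi'⟩
    have hcs : (⟨i, hi'⟩ : Fin r).castSucc = (⟨i, by omega⟩ : Fin (r + 1)) := rfl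
    have hsx : (⟨i, hi'⟩ : Fin r).succ = (⟨i + 1, by omega⟩ : Fin (r + 1)) := rfl
    rw [hcs] at hρ0l
    rw [hsx] at hρ0r
    have m0 : ρ0 ∈ hposet X hs :=
      mem_hposet_of_face hh0 (hbig ⟨i, by omega⟩).1 hρ0l hρ0c
    have e1 := ih (by omega) ρ0 m0 hρ0l hρ0c
    have e2 := quot_eq_of_big' hh0 hh1 hlt (hbig ⟨i + 1, by omega⟩).1
      (hbig ⟨i + 1, by omega⟩).2 m0 mρ hρ0r hρs hρ0c hρc
    exact e1.trans e2

lemma wrel_of_subsets_big {X : AbsSC V} {h0 h1 : ℕ} {b ρ1 ρ2 : Finset V}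
    (hb : b ∈ X.faces) (hbc : h1 + 1 ≤ b.card)
    (m1 : ρ1 ∈ simps X h0) (m2 : ρ2 ∈ simps X h0) (s1 : ρ1 ⊆ b) (s2 : ρ2 ⊆ b) :
    Wrel X h0 h1 ⟨ρ1, m1⟩ ⟨ρ2, m2⟩ :=
  Or.inr ⟨0, fun _ => b, fun _ => ⟨hb, hbc⟩, fun i => i.elim0, s1, s2⟩

/-- Choice of an `h0`-face. -/
noncomputable def pick (h0 : ℕ) (a : Finset V) (h : h0 + 1 ≤ a.card) : Finset V :=
  (Finset.exists_subset_card_eq h).choose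

lemma pick_subset (h0 : ℕ) (a : Finset V) (h : h0 + 1 ≤ a.card) : pick h0 a h ⊆ a :=
  (Finset.exists_subset_card_eq h).choose_spec.1

lemma pick_card (h0 : ℕ) (a : Finset V) (h : h0 + 1 ≤ a.card) : (pick h0 a h).card = h0 + 1 :=
  (Finset.exists_subset_card_eq h).choose_spec.2

noncomputable def Gfun (X : AbsSC V) (hs : Finset ℕ) (h0 h1 : ℕ) (hh0 : h0 ∈ hs)
    (hmin0 : ∀ j ∈ hs, h0 ≤ j) (a : {σ : Finset V // σ ∈ hposet X hs}) :
    Quot (Wrel X h0 h1) :=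
  Quot.mk _ ⟨pick h0 a.1 (hposet_faces_card hh0 hmin0 a.2).2,
    mem_simps_of_face (hposet_faces_card hh0 hmin0 a.2).1
      (pick_subset h0 a.1 (hposet_faces_card hh0 hmin0 a.2).2)
      (pick_card h0 a.1 (hposet_faces_card hh0 hmin0 a.2).2)⟩

lemma Gfun_inv_aux {X : AbsSC V} {hs : Finset ℕ} {h0 h1 : ℕ} (hh0 : h0 ∈ hs)
    (hmin0 : ∀ j ∈ hs, h0 ≤ j) (hmin1 : ∀ j ∈ hs, j ≠ h0 → h1 ≤ j)
    (a b : {σ : Finset V // σ ∈ hposet X hs}) (hab : a.1 ⊂ b.1) :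
    Gfun X hs h0 h1 hh0 hmin0 a = Gfun X hs h0 h1 hh0 hmin0 b := by
  obtain ⟨hbf, hbc⟩ := big_of_ssubset hh0 hmin0 hmin1 a.2 b.2 hab
  exact Quot.sound (wrel_of_subsets_big hbf hbc _ _
    ((pick_subset h0 a.1 _).trans hab.subset) (pick_subset h0 b.1 _))

noncomputable def quotEquivPH0 (X : AbsSC V) (hs : Finset ℕ) (h0 h1 : ℕ) (hh0 : h0 ∈ hs)
    (hh1 : h1 ∈ hs) (hlt : h0 < h1) (hmin0 : ∀ j ∈ hs, h0 ≤ j)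
    (hmin1 : ∀ j ∈ hs, j ≠ h0 → h1 ≤ j) :
    Quot (Wrel X h0 h1) ≃ Quot (Rrel (hposet X hs)) where
  toFun := Quot.lift
    (fun σ : {σ : Finset V // σ ∈ simps X h0} =>
      Quot.mk (Rrel (hposet X hs)) ⟨σ.1, mem_hposet_of_simps hh0 σ.2⟩)
    (by
      intro σ σ' hw
      rcases hw with rfl | ⟨r, τ, hbig, hlink, hσ0, hσ'⟩
      · rfl
      · have hσc : σ.1.card = h0 + 1 := (mem_filter.mp σ.2).2
        have hσ'c : σ'.1.card = h0 + 1 := (mem_filter.mp σ'.2).2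
        have hlast : τ (Fin.last r) = τ ⟨r, by omega⟩ := rfl
        rw [hlast] at hσ'
        exact quot_eq_of_walk hh0 hh1 hlt hbig hlink (mem_hposet_of_simps hh0 σ.2)
          hσc hσ0 r le_rfl σ'.1 (mem_hposet_of_simps hh0 σ'.2) hσ' hσ'c)
  invFun := Quot.lift (Gfun X hs h0 h1 hh0 hmin0)
    (by
      intro a b hab
      rcases hab with h | h
      · exact Gfun_inv_aux hh0 hmin0 hmin1 a b h
      · exact (Gfun_inv_aux hh0 hmin0 hmin1 b a h).symm)
  left_inv := by
    apply Quot.ind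
    intro σ
    have hσc : σ.1.card = h0 + 1 := (mem_filter.mp σ.2).2
    show Gfun X hs h0 h1 hh0 hmin0 ⟨σ.1, mem_hposet_of_simps hh0 σ.2⟩
      = Quot.mk (Wrel X h0 h1) σ
    unfold Gfun
    have hle := (hposet_faces_card hh0 hmin0 (mem_hposet_of_simps (hs := hs) hh0 σ.2)).2
    have hpeq : pick h0 σ.1 hle = σ.1 :=
      Finset.eq_of_subset_of_card_le (pick_subset h0 σ.1 hle)
        (by rw [pick_card h0 σ.1 hle, hσc])
    exact congrArg (Quot.mk (Wrel X h0 h1)) (Subtype.ext hpeq)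
  right_inv := by
    apply Quot.ind
    intro a
    show Quot.mk (Rrel (hposet X hs))
      ⟨pick h0 a.1 (hposet_faces_card hh0 hmin0 a.2).2, _⟩ = Quot.mk _ a
    by_cases h : pick h0 a.1 (hposet_faces_card hh0 hmin0 a.2).2 = a.1
    · exact congrArg (Quot.mk (Rrel (hposet X hs))) (Subtype.ext h)
    · refine Quot.sound (Or.inl ?_)
      rw [Finset.ssubset_iff_subset_ne]
      exact ⟨pick_subset h0 a.1 (hposet_faces_card hh0 hmin0 a.2).2, h⟩

end CombPH0


/-- the `(0,hs)`-cohesive Betti number equals the number of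
`(h0,h1)`-connected components of the set of `h0`-simplices. -/
theorem PH0_eq_connected_components {V : Type} [Fintype V] [LinearOrder V] (X : AbsSC V) (k : Type) [Field k]
    (hs : Finset ℕ) (h0 h1 : ℕ) (hh0 : h0 ∈ hs) (hh1 : h1 ∈ hs) (hlt : h0 < h1)
    (hmin0 : ∀ j ∈ hs, h0 ≤ j) (hmin1 : ∀ j ∈ hs, j ≠ h0 → h1 ≤ j) :
    pbetti (hposet X hs) k 0 =
      Nat.card (Quot (fun σ σ' : {σ : Finset V // σ ∈ simps X h0} =>
        σ = σ' ∨ ∃ (r : ℕ) (τ : Fin (r + 1) → Finset V),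
          (∀ i, τ i ∈ X.faces ∧ h1 + 1 ≤ (τ i).card) ∧
          (∀ i : Fin r, ∃ ρ ∈ X.faces, ρ.card = h0 + 1 ∧ ρ ⊆ τ i.castSucc ∧ ρ ⊆ τ i.succ) ∧
          σ.1 ⊆ τ 0 ∧ σ'.1 ⊆ τ (Fin.last r))) := by
  rw [pbetti_zero_eq]
  exact Nat.card_congr (quotEquivPH0 X hs h0 h1 hh0 hh1 hlt hmin0 hmin1).symm
end
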